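/- Joint Surjectivity Lemma: Let A = ISP(M) where M is a finite set of finite D-based algebras, and for each M in M let Ω_M be a (possibly empty) subset of D(U(M), 2), with Ω the union of the Ω_M. Then the following are equivalent: (1) the separation condition (Sep)_{M,Ω} holds; (2) for every A in A and all a ≠ b in A there exist M in M, ω in Ω_M and x in A(A, M) such that ω(x(a)) ≠ ω(x(b)); (3) for every A in A and every y in HU(A) there exist M in M, ω in Ω_M and x in A(A, M) such that y = ω ∘ x. -/

import Mathlib

open FirstOrder FirstOrder.Language FirstOrder.Language.Structure

namespace CoproductsPaper

variable {L : FirstOrder.Language.{0,0}}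

/-- Pointwise structure on a product of `L`-structures. -/
instance piStructure {ι : Type} (M : ι → Type) [∀ i, L.Structure (M i)] :
    L.Structure (∀ i, M i) where
  funMap f x i := funMap f fun j => x j i
  RelMap r x := ∀ i, RelMap r fun j => x j i

/-- Pointwise structure on a binary product of `L`-structures. -/
instance prodStructure {M N : Type} [L.Structure M] [L.Structure N] :
    L.Structure (M × N) where
  funMap f x := (funMap f fun j => (x j).1, funMap f fun j => (x j).2)
  RelMap r x := RelMap r (fun j => (x j).1) ∧ RelMap r fun j => (x j).2

/-- A choice of bounded-lattice symbols in the language `L`. -/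
structure DSig (L : FirstOrder.Language.{0,0}) where
  meet : L.Functions 2
  join : L.Functions 2
  bot : L.Functions 0
  top : L.Functions 0

variable (s : DSig L)

/-- The induced meet operation. -/
def dmeet {X : Type} [L.Structure X] (a b : X) : X := funMap s.meet ![a, b]
/-- The induced join operation. -/
def djoin {X : Type} [L.Structure X] (a b : X) : X := funMap s.join ![a, b]
/-- The induced bottom element. -/
def dbot (X : Type) [L.Structure X] : X := funMap s.bot ![]
/-- The induced top element. -/
def dtop (X : Type) [L.Structure X] : X := funMap s.top ![]

/-- The induced operations make `X` a bounded distributive lattice: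
this is the property of having a `D`-reduct. -/
structure IsDAlg (X : Type) [L.Structure X] : Prop where
  meet_comm : ∀ a b : X, dmeet s a b = dmeet s b a
  join_comm : ∀ a b : X, djoin s a b = djoin s b a
  meet_assoc : ∀ a b c : X, dmeet s (dmeet s a b) c = dmeet s a (dmeet s b c)
  join_assoc : ∀ a b c : X, djoin s (djoin s a b) c = djoin s a (djoin s b c)
  absorb_meet : ∀ a b : X, dmeet s a (djoin s a b) = a
  absorb_join : ∀ a b : X, djoin s a (dmeet s a b) = a
  meet_distrib : ∀ a b c : X, dmeet s a (djoin s b c) = djoin s (dmeet s a b) (dmeet s a c)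
  bot_join : ∀ a : X, djoin s (dbot s X) a = a
  top_meet : ∀ a : X, dmeet s (dtop s X) a = a

/-- A `D`-morphism from the `D`-reduct of `X` to the two-element lattice `2 = Bool`. -/
def IsBoolDHom {X : Type} [L.Structure X] (ω : X → Bool) : Prop :=
  (∀ a b : X, ω (dmeet s a b) = (ω a && ω b)) ∧
  (∀ a b : X, ω (djoin s a b) = (ω a || ω b)) ∧
  ω (dbot s X) = false ∧ ω (dtop s X) = true

/-- A class of `L`-structures. -/
abbrev ClassOf (L : FirstOrder.Language.{0,0}) : Type 1 := (X : Type) → L.Structure X → Prop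

/-- Membership in `ISP M` for a (multi-generator) family `M`:
isomorphic copies of subalgebras of products of the `M i`, i.e. structures embeddable
into a product of members of the family. -/
def ISPc {ι : Type} (Mf : ι → Type) [∀ i, L.Structure (Mf i)] : ClassOf L :=
  fun X iX => ∃ (κ : Type) (g : κ → ι),
    Nonempty (@FirstOrder.Language.Embedding L X (∀ k, Mf (g k)) iX inferInstance)

/-- Membership in `ISP M` for a single generator. -/
def ISPc1 (M : Type) [L.Structure M] : ClassOf L :=
  fun X iX => ∃ κ : Type,
    Nonempty (@FirstOrder.Language.Embedding L X (κ → M) iX inferInstance)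

/-- The separation condition `(Sep)_{M,Ω}`. -/
def SepCond {ι : Type} (Mf : ι → Type) [∀ i, L.Structure (Mf i)]
    (Ω : ∀ i, Set (Mf i → Bool)) : Prop :=
  ∀ (i : ι) (a b : Mf i), a ≠ b →
    ∃ (j : ι) (u : Mf i →[L] Mf j) (ω : Mf j → Bool), ω ∈ Ω j ∧ ω (u a) ≠ ω (u b)

/-- The separation condition `(Sep)_{M,ω}` for a single algebra and single carrier map. -/
def SepCond1 (M : Type) [L.Structure M] (ω : M → Bool) : Prop :=
  ∀ a b : M, a ≠ b → ∃ u : M →[L] M, ω (u a) ≠ ω (u b)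

/-- The bounded sublattice `(ω₁,ω₂)^{-1}(≤)` of `M × N`. -/
def piggySet {M N : Type} (ω₁ : M → Bool) (ω₂ : N → Bool) : Set (M × N) :=
  {p | ω₁ p.1 ≤ ω₂ p.2}

/-- `R_{ω₁,ω₂}`: the set of subalgebras of `M × N` that are maximal with respect to
being contained in `(ω₁,ω₂)^{-1}(≤)`. -/
def RSet {M N : Type} [L.Structure M] [L.Structure N]
    (ω₁ : M → Bool) (ω₂ : N → Bool) : Set (L.Substructure (M × N)) :=
  {r : L.Substructure (M × N) | (r : Set (M × N)) ⊆ piggySet ω₁ ω₂ ∧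
    ∀ r' : L.Substructure (M × N), (r' : Set (M × N)) ⊆ piggySet ω₁ ω₂ → r ≤ r' → r' = r}

/-- `(C, ε)` is a coproduct co-cone for the family `K` within the class `Acl`. -/
def IsCoprod (Acl : ClassOf L) {κ : Type} (K : κ → Type) [iK : ∀ k, L.Structure (K k)]
    (C : Type) [iC : L.Structure C] (ε : ∀ k, K k →[L] C) : Prop :=
  Acl C iC ∧ ∀ (B : Type) [iB : L.Structure B], Acl B iB →
    ∀ f : ∀ k, K k →[L] B, ∃! h : C →[L] B, ∀ k, h.comp (ε k) = f k

/-- `F` is free over the class `Acl` on the generators `gen : G → F`. -/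
def IsFreeOver (Acl : ClassOf L) (G : Type) (F : Type) [iF : L.Structure F]
    (gen : G → F) : Prop :=
  Acl F iF ∧ ∀ (B : Type) [iB : L.Structure B], Acl B iB →
    ∀ v : G → B, ∃! h : F →[L] B, ∀ x : G, h (gen x) = v x

/-- A bounded-lattice homomorphism between bounded lattices (unbundled). -/
def IsBLHom {P Q : Type} [Lattice P] [BoundedOrder P] [Lattice Q] [BoundedOrder Q]
    (h : P → Q) : Prop :=
  (∀ a b : P, h (a ⊓ b) = h a ⊓ h b) ∧ (∀ a b : P, h (a ⊔ b) = h a ⊔ h b) ∧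
    h ⊥ = ⊥ ∧ h ⊤ = ⊤

/-- A `D`-morphism from the `D`-reduct of the `L`-structure `X` to a bounded lattice `Q`. -/
def IsRedHom {X Q : Type} [L.Structure X] [Lattice Q] [BoundedOrder Q] (f : X → Q) : Prop :=
  (∀ a b : X, f (dmeet s a b) = f a ⊓ f b) ∧ (∀ a b : X, f (djoin s a b) = f a ⊔ f b) ∧
    f (dbot s X) = ⊥ ∧ f (dtop s X) = ⊤

/-- A `D`-morphism from a bounded lattice `P` to the `D`-reduct of the `L`-structure `X`. -/
def IsCoRedHom {P X : Type} [Lattice P] [BoundedOrder P] [L.Structure X] (f : P → X) : Prop :=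
  (∀ a b : P, f (a ⊓ b) = dmeet s (f a) (f b)) ∧ (∀ a b : P, f (a ⊔ b) = djoin s (f a) (f b)) ∧
    f ⊥ = dbot s X ∧ f ⊤ = dtop s X

/-- `(P, η)` is the coproduct in `D` of the `D`-reducts of the family `K`. -/
def IsDCoprodOfReducts {κ : Type} (K : κ → Type) [∀ k, L.Structure (K k)]
    (P : Type) [DistribLattice P] [BoundedOrder P] (η : ∀ k, K k → P) : Prop :=
  (∀ k, IsRedHom s (η k)) ∧
  ∀ (Q : Type) [DistribLattice Q] [BoundedOrder Q] (g : ∀ k, K k → Q),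
    (∀ k, IsRedHom s (g k)) →
      ∃! h : {h : P → Q // IsBLHom h}, ∀ k, (h : P → Q) ∘ η k = g k

/-- The discrete product topology on a function space. -/
def powTop (A M : Type) : TopologicalSpace (A → M) :=
  @Pi.topologicalSpace A (fun _ => M) (fun _ => ⊥)

/-- The natural topology on the hom-set `A(A, M)`, inherited from `M^A` with `M` discrete. -/
def homTop (A M : Type) [L.Structure A] [L.Structure M] : TopologicalSpace (A →[L] M) :=
  (powTop A M).induced (fun h => (h : A → M))

/-- The topology on `HU(A) = D(U(A), 2)`, inherited from `2^A`. -/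
def huTop (X : Type) [L.Structure X] : TopologicalSpace {f : X → Bool // IsBoolDHom s f} :=
  (powTop X Bool).induced Subtype.val

/-! If the maps `ω ∘ x` (`ω ∈ Ω_M`, `x ∈ A(A, M)`) separate the points of `A`, they are dense
among the D-morphisms `y : A → 2`: on a finite `F ⊆ A`, any `ω ∘ x` separating
`a = ⋀ {c ∈ F | y c}` from `a ∧ ⋁ {c ∈ F | ¬ y c}` agrees with `y` on `F`. As there are finitely
many pairs `(M, ω)` and `A(A, M)` is compact in `M^A`, a single pair serves every `F`, and the
approximations converge to an exact factorisation `y = ω ∘ x`. Conversely, prime filters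
separate the points of each `M ∈ M`, which lies in `A`; factorising them gives (Sep). -/

open Order

theorem exists_boundedLatticeHom_bool_ne {X : Type*} [DistribLattice X] [BoundedOrder X]
    {a b : X} (hab : a ≠ b) : ∃ f : BoundedLatticeHom X Bool, f a ≠ f b := by
  classical
  wlog hba : ¬a ≤ b generalizing a b
  · obtain ⟨f, hf⟩ := this hab.symm fun h => hab (le_antisymm (not_not.1 hba) h)
    exact ⟨f, hf.symm⟩
  have hdisj : Disjoint (PFilter.principal a : Set X) (Ideal.principal b) :=
    Set.disjoint_left.2 fun x hax hxb => hba (le_trans hax (Ideal.mem_principal.1 hxb))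
  obtain ⟨J, hJ, hbJ, haJ⟩ := DistribLattice.prime_ideal_of_disjoint_filter_ideal hdisj
  have hinf : ∀ x y, x ⊓ y ∈ J ↔ x ∈ J ∨ y ∈ J := fun x y =>
    ⟨hJ.mem_or_mem, fun h => h.elim (J.lower inf_le_left) (J.lower inf_le_right)⟩
  refine ⟨{ toFun := fun x => decide (x ∉ J)
            map_sup' := fun x y => by simp [Ideal.sup_mem_iff]
            map_inf' := fun x y => by simp [hinf, not_or]
            map_top' := by simpa using hJ.top_notMem
            map_bot' := by simp [J.bot_mem] }, ?_⟩
  have ha : a ∉ J := Set.disjoint_left.1 haJ (PFilter.mem_principal.2 le_rfl)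
  simp [ha, hbJ Ideal.mem_principal_self]

theorem exists_forall_of_forall_exists_antitone {α J : Type*} [Preorder α]
    [IsDirected α (· ≤ ·)] [Nonempty α] [Finite J] {P : J → α → Prop} (hP : ∀ j, Antitone (P j))
    (h : ∀ a, ∃ j, P j a) : ∃ j, ∀ a, P j a := by
  by_contra! hne
  have hev : ∀ᶠ a in Filter.atTop, ∀ j, ¬P j a := Filter.eventually_all.2 fun j =>
    let ⟨a, ha⟩ := hne j
    Filter.eventually_atTop.2 ⟨a, fun _ hb hPb => ha (hP j hb hPb)⟩
  obtain ⟨a, ha⟩ := hev.exists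
  obtain ⟨j, hj⟩ := h a
  exact ha j hj

section Homs

variable {X Y : Type} [L.Structure X] [L.Structure Y] (f : X →[L] Y)

theorem map_dmeet (a b : X) : f (dmeet s a b) = dmeet s (f a) (f b) := by
  unfold dmeet; rw [f.map_fun]; congr 1; funext j; fin_cases j <;> rfl

theorem map_djoin (a b : X) : f (djoin s a b) = djoin s (f a) (f b) := by
  unfold djoin; rw [f.map_fun]; congr 1; funext j; fin_cases j <;> rfl

theorem map_dbot : f (dbot s X) = dbot s Y := by
  unfold dbot; rw [f.map_fun]; congr 1; funext j; exact j.elim0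

theorem map_dtop : f (dtop s X) = dtop s Y := by
  unfold dtop; rw [f.map_fun]; congr 1; funext j; exact j.elim0

variable {s} in
theorem IsBoolDHom.comp {ω : Y → Bool} (hω : IsBoolDHom s ω) : IsBoolDHom s (ω ∘ f) := by
  obtain ⟨h_meet, h_join, h_bot, h_top⟩ := hω
  refine ⟨fun a b => ?_, fun a b => ?_, ?_, ?_⟩ <;>
    simp only [Function.comp_apply, map_dmeet, map_djoin, map_dbot, map_dtop, h_meet, h_join,
      h_bot, h_top]

end Homs

section DAlg

variable {s} {X : Type} [L.Structure X]

abbrev IsDAlg.toDistribLattice (h : IsDAlg s X) : DistribLattice X :=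
  letI : Max X := ⟨djoin s⟩
  letI : Min X := ⟨dmeet s⟩
  letI : Lattice X := Lattice.mk' h.join_comm h.join_assoc h.meet_comm h.meet_assoc
    h.absorb_join h.absorb_meet
  DistribLattice.ofInfSupLe fun a b c => (h.meet_distrib a b c).le

abbrev IsDAlg.toBoundedOrder (h : IsDAlg s X) :
    letI := h.toDistribLattice; BoundedOrder X :=
  letI := h.toDistribLattice
  { top := dtop s X
    bot := dbot s X
    le_top := fun a => inf_eq_left.mp ((h.meet_comm a _).trans (h.top_meet a))
    bot_le := fun a => sup_eq_right.mp (h.bot_join a) }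

theorem IsDAlg.exists_isBoolDHom_ne (h : IsDAlg s X) {a b : X} (hab : a ≠ b) :
    ∃ ω : X → Bool, IsBoolDHom s ω ∧ ω a ≠ ω b := by
  let := h.toDistribLattice
  let := h.toBoundedOrder
  obtain ⟨f, hf⟩ := exists_boundedLatticeHom_bool_ne hab
  exact ⟨f, ⟨map_inf f, map_sup f, map_bot f, map_top f⟩, hf⟩

end DAlg

section ListOps

variable {X : Type} [L.Structure X]

def listMeet (l : List X) : X := l.foldr (dmeet s) (dtop s X)

def listJoin (l : List X) : X := l.foldr (djoin s) (dbot s X)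

variable {s} {ω : X → Bool}

theorem IsBoolDHom.map_listMeet (hω : IsBoolDHom s ω) (l : List X) :
    ω (listMeet s l) = l.all ω := by
  induction l with
  | nil => exact hω.2.2.2
  | cons c l ih => simp only [listMeet, List.foldr_cons, List.all_cons, hω.1, ← ih]

theorem IsBoolDHom.map_listJoin (hω : IsBoolDHom s ω) (l : List X) :
    ω (listJoin s l) = l.any ω := by
  induction l with
  | nil => exact hω.2.2.1
  | cons c l ih => simp only [listJoin, List.foldr_cons, List.any_cons, hω.2.1, ← ih]

theorem IsBoolDHom.exists_eqOn_of_separates {Z : Set (X → Bool)}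
    (hZ : ∀ z ∈ Z, IsBoolDHom s z) (hsep : ∀ a b : X, a ≠ b → ∃ z ∈ Z, z a ≠ z b)
    {y : X → Bool} (hy : IsBoolDHom s y) (F : Finset X) :
    ∃ z ∈ Z, Set.EqOn z y F := by
  set a := listMeet s (F.toList.filter y)
  set b := listJoin s (F.toList.filter (!y ·))
  have hya : y a = true := by simp [a, hy.map_listMeet]
  have hyb : y b = false := by simp [b, hy.map_listJoin]
  have hne : dmeet s a b ≠ a := fun h => by simpa [hya, hyb, hy.1] using congrArg y h
  obtain ⟨z, hzZ, hz⟩ := hsep _ _ hne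
  obtain ⟨hza, hzb⟩ : z a = true ∧ z b = false := by
    rw [(hZ z hzZ).1] at hz; revert hz; cases z a <;> cases z b <;> simp
  simp only [a, b, (hZ z hzZ).map_listMeet, (hZ z hzZ).map_listJoin, List.all_eq_true,
    List.any_eq_false, List.mem_filter, Finset.mem_toList] at hza hzb
  refine ⟨z, hzZ, fun c hc => ?_⟩
  cases hyc : y c
  · simpa using hzb c ⟨hc, by simp [hyc]⟩
  · exact hza c ⟨hc, hyc⟩

end ListOps

section Compactness

variable {A M : Type} [L.Structure A] [L.Structure M]

theorem isClosed_range_coe_hom [TopologicalSpace M] [DiscreteTopology M] :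
    IsClosed (Set.range ((⇑) : (A →[L] M) → A → M)) := by
  have hrange : Set.range ((⇑) : (A →[L] M) → A → M) =
      (⋂ (n : ℕ) (fs : L.Functions n) (v : Fin n → A),
        {f | f (funMap fs v) = funMap fs (f ∘ v)}) ∩
      ⋂ (n : ℕ) (r : L.Relations n) (v : Fin n → A), {f | RelMap r v → RelMap r (f ∘ v)} := by
    ext f
    simp only [Set.mem_inter_iff, Set.mem_iInter, Set.mem_ofPred_eq]
    constructor
    · rintro ⟨x, rfl⟩
      exact ⟨fun _ => x.map_fun, fun _ => x.map_rel⟩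
    · rintro ⟨hfun, hrel⟩
      exact ⟨⟨f, hfun _, hrel _⟩, rfl⟩
  have hcomp : ∀ {n : ℕ} (v : Fin n → A), Continuous fun f : A → M => f ∘ v := fun v =>
    continuous_pi fun j => continuous_apply (v j)
  rw [hrange]
  exact .inter
    (isClosed_iInter fun _ => isClosed_iInter fun fs => isClosed_iInter fun v =>
      isClosed_eq (continuous_apply _) (continuous_of_discreteTopology.comp (hcomp v)))
    (isClosed_iInter fun _ => isClosed_iInter fun r => isClosed_iInter fun v =>
      (isClosed_discrete {w | RelMap r v → RelMap r w}).preimage (hcomp v))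

/-- The finite-intersection form of the compactness of `A(A, M)` in `M^A` for finite `M`. -/
theorem exists_hom_forall_of_forall_finset [Finite M] (R : A → M → Prop)
    (h : ∀ F : Finset A, ∃ x : A →[L] M, ∀ c ∈ F, R c (x c)) :
    ∃ x : A →[L] M, ∀ c, R c (x c) := by
  let : TopologicalSpace M := ⊥
  have : DiscreteTopology M := ⟨rfl⟩
  let C : Finset A → Set (A → M) := fun F =>
    Set.range ((⇑) : (A →[L] M) → A → M) ∩ {f | ∀ c ∈ F, R c (f c)}
  have hC_closed : ∀ F, IsClosed (C F) := fun F => by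
    refine isClosed_range_coe_hom.inter ?_
    simp only [Set.ofPred_forall]
    exact isClosed_biInter fun c _ => (isClosed_discrete _).preimage (continuous_apply c)
  have hC_anti : Antitone C := fun F G hFG => Set.inter_subset_inter_right _
    fun f hf c hc => hf c (hFG hc)
  have hC_ne : ∀ F, (C F).Nonempty := fun F =>
    let ⟨x, hx⟩ := h F
    ⟨x, ⟨x, rfl⟩, hx⟩
  obtain ⟨f, hf⟩ := IsCompact.nonempty_iInter_of_directed_nonempty_isCompact_isClosed C
    hC_anti.directed_ge hC_ne (fun F => (hC_closed F).isCompact) hC_closed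
  rw [Set.mem_iInter] at hf
  obtain ⟨x, rfl⟩ := (hf ∅).1
  exact ⟨x, fun c => (hf {c}).2 c (Finset.mem_singleton_self c)⟩

end Compactness

section ISP

variable {ι : Type} {Mf : ι → Type} [∀ i, L.Structure (Mf i)]

def projHom (k : ι) : (∀ i, Mf i) →[L] Mf k where
  toFun v := v k
  map_rel' _ _ h := h k

theorem ISPc.of_mem (i : ι) : ISPc (L := L) Mf (Mf i) inferInstance :=
  ⟨Unit, fun _ => i, ⟨{
    toFun := fun a _ => a
    inj' := fun _ _ h => congrFun h ()
    map_rel' := fun _ _ => ⟨fun h => h (), fun h _ => h⟩ }⟩⟩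

theorem ISPc.exists_hom_ne {A : Type} [iA : L.Structure A] (hA : ISPc Mf A iA) {a b : A}
    (hab : a ≠ b) : ∃ (i : ι) (x : A →[L] Mf i), x a ≠ x b := by
  obtain ⟨κ, g, ⟨e⟩⟩ := hA
  obtain ⟨k, hk⟩ : ∃ k, e a k ≠ e b k := Function.ne_iff.1 (e.injective.ne hab)
  exact ⟨g k, (projHom k).comp e.toHom, hk⟩

end ISP

variable {s} in
theorem exists_eq_comp_of_separates {ι : Type} [Finite ι] {Mf : ι → Type}
    [∀ i, L.Structure (Mf i)] [∀ i, Finite (Mf i)] {Ω : ∀ i, Set (Mf i → Bool)}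
    (hΩ : ∀ i, ∀ ω ∈ Ω i, IsBoolDHom s ω) {A : Type} [L.Structure A]
    (hsep : ∀ a b : A, a ≠ b →
      ∃ (i : ι) (ω : Mf i → Bool) (x : A →[L] Mf i), ω ∈ Ω i ∧ ω (x a) ≠ ω (x b))
    {y : A → Bool} (hy : IsBoolDHom s y) :
    ∃ (i : ι) (ω : Mf i → Bool) (x : A →[L] Mf i), ω ∈ Ω i ∧ y = ω ∘ x := by
  let P : (Σ i, (Mf i → Bool)) → Finset A → Prop := fun j F =>
    j.2 ∈ Ω j.1 ∧ ∃ x : A →[L] Mf j.1, ∀ c ∈ F, j.2 (x c) = y c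
  have hP_anti : ∀ j, Antitone (P j) := fun _ _ _ hFG ⟨hω, x, hx⟩ =>
    ⟨hω, x, fun c hc => hx c (hFG hc)⟩
  have hP_local : ∀ F, ∃ j, P j F := fun F => by
    obtain ⟨z, ⟨i, ω, x, hω, rfl⟩, hz⟩ := IsBoolDHom.exists_eqOn_of_separates
      (Z := {z | ∃ (i : ι) (ω : Mf i → Bool) (x : A →[L] Mf i), ω ∈ Ω i ∧ z = ω ∘ x})
      (by rintro _ ⟨i, ω, x, hω, rfl⟩; exact (hΩ i ω hω).comp x)
      (fun a b hab => let ⟨i, ω, x, hω, hne⟩ := hsep a b hab; ⟨ω ∘ x, ⟨i, ω, x, hω, rfl⟩, hne⟩)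
      hy F
    exact ⟨⟨i, ω⟩, hω, x, fun c hc => hz hc⟩
  obtain ⟨⟨i, ω⟩, hj⟩ := exists_forall_of_forall_exists_antitone hP_anti hP_local
  obtain ⟨x, hx⟩ := exists_hom_forall_of_forall_finset (fun c m => ω m = y c) fun F => (hj F).2
  exact ⟨i, ω, x, (hj ∅).1, funext fun c => (hx c).symm⟩

/-- Joint Surjectivity Lemma.
Let `A = ISP(M)` where `M` is a finite set of finite `D`-based algebras, and for each
`M ∈ M` let `Ω_M ⊆ D(U(M), 2)`.  Then the separation condition, the point-separation
condition (2), and the covering condition (3) for `HU(A)` are equivalent. -/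
theorem joint_surjectivity
    (L : FirstOrder.Language.{0,0}) (s : DSig L)
    (ι : Type) [Fintype ι] (Mf : ι → Type) [∀ i, L.Structure (Mf i)] [∀ i, Fintype (Mf i)]
    (hDbased : ∀ i, IsDAlg s (Mf i))
    (Ω : ∀ i, Set (Mf i → Bool)) (hΩ : ∀ i, ∀ ω ∈ Ω i, IsBoolDHom s ω) :
    List.TFAE
      [ SepCond (L := L) Mf Ω,
        ∀ (A : Type) [iA : L.Structure A], ISPc (L := L) Mf A iA → ∀ a b : A, a ≠ b →
          ∃ (i : ι) (ω : Mf i → Bool) (x : A →[L] Mf i), ω ∈ Ω i ∧ ω (x a) ≠ ω (x b),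
        ∀ (A : Type) [iA : L.Structure A], ISPc (L := L) Mf A iA → ∀ y : A → Bool, IsBoolDHom s y →
          ∃ (i : ι) (ω : Mf i → Bool) (x : A →[L] Mf i), ω ∈ Ω i ∧ y = ω ∘ x ] := by
  tfae_have 1 → 2 := fun hsep A _ hA a b hab => by
    obtain ⟨i, x, hx⟩ := hA.exists_hom_ne hab
    obtain ⟨j, u, ω, hω, hne⟩ := hsep i _ _ hx
    exact ⟨j, ω, u.comp x, hω, hne⟩
  tfae_have 2 → 3 := fun h2 A _ hA _ hy => exists_eq_comp_of_separates hΩ (h2 A hA) hy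
  tfae_have 3 → 1 := fun h3 i a b hab => by
    obtain ⟨f, hf, hne⟩ := (hDbased i).exists_isBoolDHom_ne hab
    obtain ⟨j, ω, x, hω, rfl⟩ := h3 (Mf i) (ISPc.of_mem i) f hf
    exact ⟨j, x, ω, hω, hne⟩
  tfae_finish

end CoproductsPaper
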